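/- arXiv:1706.00306 — 3 statements merged into one kernel-verified Lean document; each statement's English description precedes it below -/
import Mathlib

section
/- Mass conservation of the semi-discrete NLSE system: if r(t), s(t) ∈ ℝ^N solve the coupled system M r'(t) = A s(t) + b_s(r(t), s(t)) and M s'(t) = −A r(t) − b_r(r(t), s(t)), where M is symmetric positive definite, A is symmetric, and the nonlinear terms satisfy r^T b_s(r,s) = s^T b_r(r,s) for all r, s (cross-symmetry of the cubic nonlinearity), then the discrete mass N(t) = r(t)^T M r(t) + s(t)^T M s(t) is constant in time. -/
open Matrix

/-
Differentiating the mass gives `2 (rᵀ M r' + sᵀ M s')` because `M` is symmetric. By the equations of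
motion this is `2 (rᵀ A s + rᵀ b_s - sᵀ A r - sᵀ b_r)`, which vanishes since `A` is symmetric and the
nonlinearity is cross-symmetric. A function with zero derivative everywhere is constant.
-/

section Calculus

variable {ι : Type*} [Fintype ι] {x y : ℝ → ι → ℝ} {x' y' : ι → ℝ} {t : ℝ}

theorem HasDerivAt.dotProduct (hx : HasDerivAt x x' t) (hy : HasDerivAt y y' t) :
    HasDerivAt (fun t => x t ⬝ᵥ y t) (x' ⬝ᵥ y t + x t ⬝ᵥ y') t := by
  have hsum := HasDerivAt.fun_sum (u := Finset.univ) fun i _ =>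
    (hasDerivAt_pi.1 hx i).fun_mul (hasDerivAt_pi.1 hy i)
  rw [Finset.sum_add_distrib] at hsum
  exact hsum

theorem HasDerivAt.mulVec (M : Matrix ι ι ℝ) (hx : HasDerivAt x x' t) :
    HasDerivAt (fun t => M *ᵥ x t) (M *ᵥ x') t :=
  (Matrix.mulVecLin M).toContinuousLinearMap.hasFDerivAt.comp_hasDerivAt t hx

theorem HasDerivAt.dotProduct_mulVec_self {M : Matrix ι ι ℝ} (hM : Mᵀ = M)
    (hx : HasDerivAt x x' t) :
    HasDerivAt (fun t => x t ⬝ᵥ M *ᵥ x t) (2 * (x t ⬝ᵥ M *ᵥ x')) t := by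
  refine (hx.dotProduct (hx.mulVec M)).congr_deriv ?_
  rw [← hM, dotProduct_transpose_mulVec, hM]
  ring

end Calculus

theorem dotProduct_mulVec_add_dotProduct_mulVec_eq_zero {ι : Type*} [Fintype ι]
    {M A : Matrix ι ι ℝ} (hA : Aᵀ = A) {r s r' s' br bs : ι → ℝ}
    (hcross : r ⬝ᵥ bs = s ⬝ᵥ br) (hr : M *ᵥ r' = A *ᵥ s + bs)
    (hs : M *ᵥ s' = -(A *ᵥ r) - br) :
    r ⬝ᵥ M *ᵥ r' + s ⬝ᵥ M *ᵥ s' = 0 := by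
  have hAsymm : r ⬝ᵥ A *ᵥ s = s ⬝ᵥ A *ᵥ r := by
    rw [← dotProduct_transpose_mulVec, hA]
  rw [hr, hs, dotProduct_add, dotProduct_sub, dotProduct_neg, hAsymm, hcross]
  ring

theorem stmt_6_general {N : ℕ} (M A : Matrix (Fin N) (Fin N) ℝ)
    (hMs : Mᵀ = M) (hA : Aᵀ = A)
    (br bs : (Fin N → ℝ) → (Fin N → ℝ) → (Fin N → ℝ))
    (hcross : ∀ r s : Fin N → ℝ, r ⬝ᵥ bs r s = s ⬝ᵥ br r s)
    (r s r' s' : ℝ → Fin N → ℝ)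
    (hr : ∀ t, HasDerivAt r (r' t) t) (hs : ∀ t, HasDerivAt s (s' t) t)
    (hoder : ∀ t, M.mulVec (r' t) = A.mulVec (s t) + bs (r t) (s t))
    (hodes : ∀ t, M.mulVec (s' t) = -(A.mulVec (r t)) - br (r t) (s t)) :
    ∀ t₁ t₂ : ℝ,
      r t₁ ⬝ᵥ M.mulVec (r t₁) + s t₁ ⬝ᵥ M.mulVec (s t₁) =
      r t₂ ⬝ᵥ M.mulVec (r t₂) + s t₂ ⬝ᵥ M.mulVec (s t₂) := by
  have hmass : ∀ t, HasDerivAt (fun t => r t ⬝ᵥ M *ᵥ r t + s t ⬝ᵥ M *ᵥ s t) 0 t := by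
    intro t
    refine (((hr t).dotProduct_mulVec_self hMs).add
      ((hs t).dotProduct_mulVec_self hMs)).congr_deriv ?_
    rw [← mul_add, dotProduct_mulVec_add_dotProduct_mulVec_eq_zero hA (hcross (r t) (s t))
      (hoder t) (hodes t), mul_zero]
  exact is_const_of_deriv_eq_zero (fun t => (hmass t).differentiableAt) fun t => (hmass t).deriv

/-- Mass conservation of the semi-discrete NLSE system: if
`M r' = A s + b_s(r,s)` and `M s' = -A r - b_r(r,s)` with `M` symmetric positive
definite, `A` symmetric, and the cross-symmetry `rᵀ b_s(r,s) = sᵀ b_r(r,s)`,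
then the discrete mass `rᵀ M r + sᵀ M s` is constant in time. -/
theorem stmt_6 {N : ℕ} (M A : Matrix (Fin N) (Fin N) ℝ)
    (hM : M.PosDef) (hMs : Mᵀ = M) (hA : Aᵀ = A)
    (br bs : (Fin N → ℝ) → (Fin N → ℝ) → (Fin N → ℝ))
    (hcross : ∀ r s : Fin N → ℝ, r ⬝ᵥ bs r s = s ⬝ᵥ br r s)
    (r s r' s' : ℝ → Fin N → ℝ)
    (hr : ∀ t, HasDerivAt r (r' t) t) (hs : ∀ t, HasDerivAt s (s' t) t)
    (hoder : ∀ t, M.mulVec (r' t) = A.mulVec (s t) + bs (r t) (s t))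
    (hodes : ∀ t, M.mulVec (s' t) = -(A.mulVec (r t)) - br (r t) (s t)) :
    ∀ t₁ t₂ : ℝ,
      r t₁ ⬝ᵥ M.mulVec (r t₁) + s t₁ ⬝ᵥ M.mulVec (s t₁) =
      r t₂ ⬝ᵥ M.mulVec (r t₂) + s t₂ ⬝ᵥ M.mulVec (s t₂) :=
  stmt_6_general M A hMs hA br bs hcross r s r' s' hr hs hoder hodes
end

section
/- The AVF (average vector field) method preserves the energy of Hamiltonian systems: if y_{n+1} satisfies (y_{n+1} − y_n)/τ = ∫₀¹ f(ξ y_{n+1} + (1−ξ) y_n) dξ with f(y) = S ∇H(y) for a constant skew-symmetric matrix S and continuously differentiable H, then H(y_{n+1}) = H(y_n). -/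
open Matrix MeasureTheory

/-- The AVF method preserves the energy of Hamiltonian systems: if
`y_{n+1} - y_n = τ ∫₀¹ S ∇H(ξ y_{n+1} + (1-ξ) y_n) dξ` with `S` a constant
skew-symmetric matrix and `H` continuously differentiable, then
`H(y_{n+1}) = H(y_n)`. -/
theorem stmt_9 {n : ℕ} (S : Matrix (Fin n) (Fin n) ℝ) (hS : Sᵀ = -S)
    (H : EuclideanSpace ℝ (Fin n) → ℝ)
    (gradH : EuclideanSpace ℝ (Fin n) → EuclideanSpace ℝ (Fin n))
    (hH : ∀ x, HasGradientAt H (gradH x) x) (hHc : Continuous gradH)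
    (τ : ℝ) (hτ : 0 < τ) (yn yn1 : EuclideanSpace ℝ (Fin n))
    (havf : yn1 - yn =
      τ • ∫ ξ in (0:ℝ)..1,
        (WithLp.toLp 2 (S.mulVec (gradH (ξ • yn1 + (1 - ξ) • yn))) : EuclideanSpace ℝ (Fin n))) :
    H yn1 = H yn := by
  classical
  set c : EuclideanSpace ℝ (Fin n) := yn1 - yn with hc
  have hpath : ∀ ξ : ℝ, ξ • yn1 + (1 - ξ) • yn = yn + ξ • c := by
    intro ξ
    simp only [hc, smul_sub, sub_smul, one_smul]
    abel
  have hgc : Continuous (fun ξ : ℝ => gradH (yn + ξ • c)) :=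
    hHc.comp (continuous_const.add (continuous_id.smul continuous_const))
  -- componentwise continuity of the gradient along the path
  have hgi : ∀ i : Fin n, Continuous fun ξ : ℝ => gradH (yn + ξ • c) i :=
    fun i => (EuclideanSpace.proj i).continuous.comp hgc
  -- componentwise integral of the gradient along the path
  set G : Fin n → ℝ := fun i => ∫ ξ in (0:ℝ)..1, gradH (yn + ξ • c) i with hG
  -- Step 1: extract components from the AVF relation
  simp_rw [hpath] at havf
  have hF : Continuous (fun ξ : ℝ =>
      (S.mulVec (gradH (yn + ξ • c)) : Fin n → ℝ)) := by
    refine continuous_pi fun i => ?_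
    have : (fun ξ : ℝ => (S.mulVec (gradH (yn + ξ • c))) i)
        = fun ξ : ℝ => ∑ j, S i j * gradH (yn + ξ • c) j := by
      funext ξ; simp [Matrix.mulVec, dotProduct]
    rw [this]
    exact continuous_finset_sum _ fun j _ => continuous_const.mul (hgi j)
  have hFint : IntervalIntegrable
      (fun ξ : ℝ => (S.mulVec (gradH (yn + ξ • c)) : Fin n → ℝ)) volume 0 1 :=
    hF.intervalIntegrable 0 1
  have hci : ∀ i : Fin n, c i = τ * ∫ ξ in (0:ℝ)..1, (S.mulVec (gradH (yn + ξ • c))) i := by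
    intro i
    have h := congrArg (fun v : EuclideanSpace ℝ (Fin n) => v i) havf
    have h2 : (∫ ξ in (0:ℝ)..1,
        (WithLp.toLp 2 (S.mulVec (gradH (yn + ξ • c))) : EuclideanSpace ℝ (Fin n))) i
        = ∫ ξ in (0:ℝ)..1, (S.mulVec (gradH (yn + ξ • c))) i := by
      have hint : IntervalIntegrable (fun ξ : ℝ =>
          (WithLp.toLp 2 (S.mulVec (gradH (yn + ξ • c))) : EuclideanSpace ℝ (Fin n))) volume 0 1 :=
        ((PiLp.continuous_toLp 2 (fun _ : Fin n => ℝ)).comp hF).intervalIntegrable 0 1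
      exact ((EuclideanSpace.proj (𝕜 := ℝ) i).intervalIntegral_comp_comm hint).symm
    calc c i = (yn1 - yn) i := rfl
      _ = τ * (∫ ξ in (0:ℝ)..1,
          (WithLp.toLp 2 (S.mulVec (gradH (yn + ξ • c))) : EuclideanSpace ℝ (Fin n))) i := by
        rw [h]; simp only [PiLp.smul_apply, smul_eq_mul]
      _ = _ := by rw [h2]
  -- evaluate the componentwise integral via G
  have hSi : ∀ i : Fin n,
      (∫ ξ in (0:ℝ)..1, (S.mulVec (gradH (yn + ξ • c))) i) = (S.mulVec G) i := by
    intro i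
    have h1 : (fun ξ : ℝ => (S.mulVec (gradH (yn + ξ • c))) i)
        = fun ξ : ℝ => ∑ j, S i j * gradH (yn + ξ • c) j := by
      funext ξ; simp [Matrix.mulVec, dotProduct]
    rw [h1, intervalIntegral.integral_finset_sum]
    · simp only [intervalIntegral.integral_const_mul]
      simp [Matrix.mulVec, dotProduct, hG]
    · exact fun j _ => (continuous_const.mul (hgi j)).intervalIntegrable 0 1
  have hcS : ∀ i : Fin n, c i = τ * (S.mulVec G) i := fun i => by
    rw [hci i, hSi i]
  -- Step 2: fundamental theorem of calculus for H along the segment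
  have hderiv : ∀ ξ : ℝ, HasDerivAt (fun t : ℝ => H (yn + t • c))
      (inner ℝ (gradH (yn + ξ • c)) c : ℝ) ξ := by
    intro ξ
    have h1 : HasDerivAt (fun t : ℝ => yn + t • c) c ξ := by
      simpa using ((hasDerivAt_id ξ).smul_const c).const_add yn
    have h2 := ((hH (yn + ξ • c)).hasFDerivAt).comp_hasDerivAt ξ h1
    simp [InnerProductSpace.toDual_apply_apply] at h2
    exact h2
  have hcont : Continuous fun ξ : ℝ => (inner ℝ (gradH (yn + ξ • c)) c : ℝ) :=
    hgc.inner continuous_const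
  have hftc : (∫ ξ in (0:ℝ)..1, (inner ℝ (gradH (yn + ξ • c)) c : ℝ)) =
      H (yn + (1:ℝ) • c) - H (yn + (0:ℝ) • c) :=
    intervalIntegral.integral_eq_sub_of_hasDerivAt (fun ξ _ => hderiv ξ)
      (hcont.intervalIntegrable 0 1)
  -- Step 3: compute the integral of the inner product componentwise
  have hinner : (∫ ξ in (0:ℝ)..1, (inner ℝ (gradH (yn + ξ • c)) c : ℝ))
      = ∑ i, G i * c i := by
    have h1 : (fun ξ : ℝ => (inner ℝ (gradH (yn + ξ • c)) c : ℝ))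
        = fun ξ : ℝ => ∑ i, gradH (yn + ξ • c) i * c i := by
      funext ξ
      simp [PiLp.inner_apply, RCLike.inner_apply, mul_comm]
    rw [h1, intervalIntegral.integral_finset_sum]
    · simp only [intervalIntegral.integral_mul_const, hG]
    · exact fun i _ => ((hgi i).mul continuous_const).intervalIntegrable 0 1
  -- Step 4: skew-symmetry kills the quadratic form
  have hskew : G ⬝ᵥ S.mulVec G = 0 := by
    have h2 : G ⬝ᵥ S.mulVec G = -(G ⬝ᵥ S.mulVec G) := by
      conv_lhs => rw [Matrix.dotProduct_mulVec, ← Matrix.mulVec_transpose, hS]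
      simp [Matrix.neg_mulVec, dotProduct_comm]
    linarith
  have hsum : (∑ i, G i * c i) = τ * (G ⬝ᵥ S.mulVec G) := by
    simp only [dotProduct, Finset.mul_sum]
    refine Finset.sum_congr rfl fun i _ => ?_
    rw [hcS i]
    simp only [Matrix.mulVec, dotProduct]
    ring
  have hzero : H (yn + (1:ℝ) • c) - H (yn + (0:ℝ) • c) = 0 := by
    rw [← hftc, hinner, hsum, hskew, mul_zero]
  simp only [one_smul, zero_smul, add_zero, hc] at hzero
  have : H (yn + (yn1 - yn)) = H yn := by linarith
  simpa using this
end

section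
/- DEIM energy drift bound: let z^r solve (z^r)' = J_r[U^T A U z^r + U^T b̂(U z^r)], where b̂ is the DEIM approximation of b. If ∇E(Uz^r) = A U z^r + b(U z^r), then d/dt E(U z^r(t)) = [U^T ∇E(Uz^r)]^T J_r U^T [b̂(Uz^r) − b(Uz^r)], and consequently |d/dt E(U z^r(t))| ≤ ‖∇E(Uz^r)‖ · ‖U‖² · ‖J_r‖ · ‖b̂(Uz^r) − b(Uz^r)‖ in operator/Euclidean norms. -/
open Matrix

/-- The operator (spectral) norm of a real matrix, via its action on
Euclidean spaces. -/
noncomputable def matOpNorm {m n : ℕ} (A : Matrix (Fin m) (Fin n) ℝ) : ℝ :=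
  ‖LinearMap.toContinuousLinearMap (Matrix.toEuclideanLin A)‖

/-- View a plain vector as an element of Euclidean space (so that `‖·‖` is the
Euclidean norm). -/
def toEuc {n : ℕ} (v : Fin n → ℝ) : EuclideanSpace ℝ (Fin n) := WithLp.toLp 2 v

/-! Along the reduced trajectory the chain rule gives `d/dt E(U z) = ⟨∇E, U J_r Uᵀ (A U z + b̂)⟩`.
Writing `Uᵀ (A U z + b̂) = Uᵀ ∇E + Uᵀ (b̂ - b)`, the first summand contributes the quadratic form
of the skew-symmetric `J_r` at `Uᵀ ∇E`, which vanishes, so only the DEIM error `b̂ - b` drives the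
energy; Cauchy–Schwarz together with `‖Uᵀ‖ = ‖U‖` bounds that term. -/

section SkewSymmetric

variable {ι R : Type*} [Fintype ι] [CommRing R] [IsAddTorsionFree R] {J : Matrix ι ι R}

theorem dotProduct_mulVec_self_eq_zero_of_transpose_eq_neg (hJ : Jᵀ = -J) (x : ι → R) :
    x ⬝ᵥ J *ᵥ x = 0 := by
  have h : x ⬝ᵥ J *ᵥ x = -(x ⬝ᵥ J *ᵥ x) := by
    conv_lhs =>
      rw [dotProduct_mulVec, ← mulVec_transpose, hJ, neg_mulVec, neg_dotProduct, dotProduct_comm]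
  exact self_eq_neg.mp h

theorem dotProduct_mulVec_add_of_transpose_eq_neg (hJ : Jᵀ = -J) (x y : ι → R) :
    x ⬝ᵥ J *ᵥ (x + y) = x ⬝ᵥ J *ᵥ y := by
  rw [mulVec_add, dotProduct_add, dotProduct_mulVec_self_eq_zero_of_transpose_eq_neg hJ, zero_add]

end SkewSymmetric

theorem inner_toEuc_toEuc {n : ℕ} (x y : Fin n → ℝ) : inner ℝ (toEuc x) (toEuc y) = x ⬝ᵥ y := by
  rw [toEuc, toEuc, EuclideanSpace.inner_toLp_toLp, star_trivial, dotProduct_comm]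

section OperatorNorm

variable {m n : ℕ}

theorem matOpNorm_nonneg (M : Matrix (Fin m) (Fin n) ℝ) : 0 ≤ matOpNorm M := norm_nonneg _

theorem norm_toEuc_mulVec_le (M : Matrix (Fin m) (Fin n) ℝ) (x : Fin n → ℝ) :
    ‖toEuc (M *ᵥ x)‖ ≤ matOpNorm M * ‖toEuc x‖ :=
  (LinearMap.toContinuousLinearMap (toEuclideanLin M)).le_opNorm (toEuc x)

theorem matOpNorm_transpose (M : Matrix (Fin m) (Fin n) ℝ) : matOpNorm Mᵀ = matOpNorm M := by
  rw [matOpNorm, ← conjTranspose_eq_transpose_of_trivial, toEuclideanLin_conjTranspose_eq_adjoint,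
    LinearMap.adjoint_toContinuousLinearMap]
  exact LinearIsometryEquiv.norm_map _ _

theorem abs_transpose_mulVec_dotProduct_le (U : Matrix (Fin m) (Fin n) ℝ)
    (J : Matrix (Fin n) (Fin n) ℝ) (p q : Fin m → ℝ) :
    |(Uᵀ *ᵥ p) ⬝ᵥ J *ᵥ (Uᵀ *ᵥ q)| ≤
      ‖toEuc p‖ * matOpNorm U ^ 2 * matOpNorm J * ‖toEuc q‖ := by
  have hUT (v : Fin m → ℝ) : ‖toEuc (Uᵀ *ᵥ v)‖ ≤ matOpNorm U * ‖toEuc v‖ :=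
    matOpNorm_transpose U ▸ norm_toEuc_mulVec_le Uᵀ v
  calc |(Uᵀ *ᵥ p) ⬝ᵥ J *ᵥ (Uᵀ *ᵥ q)|
      ≤ ‖toEuc (Uᵀ *ᵥ p)‖ * ‖toEuc (J *ᵥ (Uᵀ *ᵥ q))‖ := by
        rw [← inner_toEuc_toEuc]; exact abs_real_inner_le_norm _ _
    _ ≤ (matOpNorm U * ‖toEuc p‖) * (matOpNorm J * (matOpNorm U * ‖toEuc q‖)) := by
        have hJ := (norm_toEuc_mulVec_le J _).trans
          (mul_le_mul_of_nonneg_left (hUT q) (matOpNorm_nonneg J))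
        exact mul_le_mul (hUT p) hJ (norm_nonneg _)
          (mul_nonneg (matOpNorm_nonneg U) (norm_nonneg _))
    _ = ‖toEuc p‖ * matOpNorm U ^ 2 * matOpNorm J * ‖toEuc q‖ := by ring

end OperatorNorm

theorem HasGradientAt.hasDerivAt_comp_mulVec {n k : ℕ}
    {E : EuclideanSpace ℝ (Fin n) → ℝ} {U : Matrix (Fin n) (Fin k) ℝ}
    {z : ℝ → EuclideanSpace ℝ (Fin k)} {g : EuclideanSpace ℝ (Fin n)}
    {z' : EuclideanSpace ℝ (Fin k)} {t : ℝ} (hE : HasGradientAt E g (WithLp.toLp 2 (U *ᵥ z t)))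
    (hz : HasDerivAt z z' t) :
    HasDerivAt (fun τ => E (WithLp.toLp 2 (U *ᵥ z τ))) (g ⬝ᵥ U *ᵥ z') t := by
  have hUz : HasDerivAt (fun τ => WithLp.toLp 2 (U *ᵥ z τ)) (WithLp.toLp 2 (U *ᵥ z')) t :=
    (toEuclideanLin U).toContinuousLinearMap.hasFDerivAt.comp_hasDerivAt t hz
  have h := hE.hasFDerivAt.comp_hasDerivAt t hUz
  simp only [Function.comp_def, InnerProductSpace.toDual_apply_apply,
    EuclideanSpace.inner_eq_star_dotProduct, star_trivial] at h
  rwa [dotProduct_comm] at h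

/-- DEIM energy drift bound: if `(z^r)' = J_r (Uᵀ A U z^r + Uᵀ b̂(U z^r))`, `J_r`
skew-symmetric, and `∇E(w) = A w + b(w)`, then
`d/dt E(U z^r) = [Uᵀ ∇E(U z^r)]ᵀ J_r Uᵀ (b̂(U z^r) - b(U z^r))` and
`|d/dt E(U z^r)| ≤ ‖∇E(U z^r)‖ ‖U‖² ‖J_r‖ ‖b̂(U z^r) - b(U z^r)‖`. -/
theorem stmt_10 {n k : ℕ} (U : Matrix (Fin n) (Fin k) ℝ)
    (Jr : Matrix (Fin k) (Fin k) ℝ) (hJr : Jrᵀ = -Jr)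
    (A : Matrix (Fin n) (Fin n) ℝ)
    (b bhat : (Fin n → ℝ) → (Fin n → ℝ))
    (E : EuclideanSpace ℝ (Fin n) → ℝ)
    (hE : ∀ w : EuclideanSpace ℝ (Fin n),
      HasGradientAt E (toEuc (A.mulVec w + b w)) w)
    (zr zr' : ℝ → EuclideanSpace ℝ (Fin k))
    (hzr : ∀ t, HasDerivAt zr (zr' t) t)
    (hode : ∀ t, (zr' t : Fin k → ℝ) =
      Jr.mulVec (Uᵀ.mulVec (A.mulVec (U.mulVec (zr t))) +
                 Uᵀ.mulVec (bhat (U.mulVec (zr t))))) :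
    ∀ t,
      (deriv (fun τ => E (WithLp.toLp 2 (U.mulVec (zr τ)))) t =
        (Uᵀ.mulVec (A.mulVec (U.mulVec (zr t)) + b (U.mulVec (zr t)))) ⬝ᵥ
          (Jr.mulVec (Uᵀ.mulVec (bhat (U.mulVec (zr t)) - b (U.mulVec (zr t)))))) ∧
      |deriv (fun τ => E (WithLp.toLp 2 (U.mulVec (zr τ)))) t| ≤
        ‖toEuc (A.mulVec (U.mulVec (zr t)) + b (U.mulVec (zr t)))‖ *
          matOpNorm U ^ 2 * matOpNorm Jr *
          ‖toEuc (bhat (U.mulVec (zr t)) - b (U.mulVec (zr t)))‖ := by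
  intro t
  set w := U *ᵥ zr t
  have hderiv := (hE (WithLp.toLp 2 w)).hasDerivAt_comp_mulVec (hzr t)
  have hsplit :
      Uᵀ *ᵥ (A *ᵥ w) + Uᵀ *ᵥ bhat w = Uᵀ *ᵥ (A *ᵥ w + b w) + Uᵀ *ᵥ (bhat w - b w) := by
    rw [← mulVec_add, ← mulVec_add, add_add_sub_cancel]
  have hdrift : deriv (fun τ => E (WithLp.toLp 2 (U *ᵥ zr τ))) t =
      (Uᵀ *ᵥ (A *ᵥ w + b w)) ⬝ᵥ Jr *ᵥ (Uᵀ *ᵥ (bhat w - b w)) := by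
    rw [hderiv.deriv, hode t, hsplit, dotProduct_mulVec, ← mulVec_transpose]
    exact dotProduct_mulVec_add_of_transpose_eq_neg hJr _ _
  exact ⟨hdrift, hdrift ▸ abs_transpose_mulVec_dotProduct_le U Jr _ _⟩
end
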